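/- arXiv:2101.06490 — 9 statements merged into one kernel-verified Lean document; each statement's English description precedes it below -/
import Mathlib

section
/- For any binary string S, if VCdim(S) ≥ d+1 then SWdim(S) ≥ d; consequently VCdim(S) − 1 ≤ SWdim(S) ≤ VCdim(S). -/
/-- The family of subsets of `ℕ` arising from finite contiguous substrings of `S`:
a substring starting at `t` of length `w` yields `{i | i < w ∧ S (t+i) = true}`. -/
def subFam (S : ℕ → Bool) : Set (Set ℕ) :=
  {A | ∃ t w : ℕ, A = {i | i < w ∧ S (t + i) = true}}

/-- The subfamily arising from substrings of a fixed length `w`. -/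
def subFamW (S : ℕ → Bool) (w : ℕ) : Set (Set ℕ) :=
  {A | ∃ t : ℕ, A = {i | i < w ∧ S (t + i) = true}}

/-- A family of subsets of `ℕ` shatters a finite set `A`. -/
def FamShatters (F : Set (Set ℕ)) (A : Finset ℕ) : Prop :=
  ∀ B ⊆ A, ∃ C ∈ F, ∀ i ∈ A, (i ∈ C ↔ i ∈ B)

/-- The VC dimension of a family of subsets of `ℕ`, as an extended natural. -/
noncomputable def vcDimF (F : Set (Set ℕ)) : ℕ∞ :=
  sSup {n : ℕ∞ | ∃ A : Finset ℕ, FamShatters F A ∧ (A.card : ℕ∞) = n}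

/-- The VC dimension of a binary string. -/
noncomputable def VCdim (S : ℕ → Bool) : ℕ∞ := vcDimF (subFam S)

/-- The sliding-window VC dimension of a binary string. -/
noncomputable def SWdim (S : ℕ → Bool) : ℕ∞ := ⨆ w : ℕ, vcDimF (subFamW S w)

/-!
A window that realises `B ∪ {m}` on a shattered set `A` with maximum `m` must be longer than `m`,
so cutting it down to length `m` leaves its trace on `A \ {m}` unchanged. Hence the windows of the
single length `m` shatter `A \ {m}`, which costs one in dimension; conversely windows of a fixed
length are among all substrings.
-/

theorem FamShatters.mono {F G : Set (Set ℕ)} (h : F ⊆ G) {A : Finset ℕ}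
    (hA : FamShatters F A) : FamShatters G A := fun B hB =>
  let ⟨C, hC, hCB⟩ := hA B hB
  ⟨C, h hC, hCB⟩

theorem FamShatters.card_le_vcDimF {F : Set (Set ℕ)} {A : Finset ℕ} (h : FamShatters F A) :
    (A.card : ℕ∞) ≤ vcDimF F :=
  le_sSup ⟨A, h, rfl⟩

theorem vcDimF_mono {F G : Set (Set ℕ)} (h : F ⊆ G) : vcDimF F ≤ vcDimF G :=
  sSup_le_sSup fun _ ⟨A, hA, hcard⟩ => ⟨A, hA.mono h, hcard⟩

theorem exists_famShatters_of_lt_vcDimF {F : Set (Set ℕ)} {d : ℕ} (h : (d : ℕ∞) < vcDimF F) :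
    ∃ A : Finset ℕ, FamShatters F A ∧ d < A.card := by
  obtain ⟨_, ⟨A, hA, rfl⟩, hlt⟩ := lt_sSup_iff.mp h
  exact ⟨A, hA, by exact_mod_cast hlt⟩

theorem subFamW_subset_subFam (S : ℕ → Bool) (w : ℕ) : subFamW S w ⊆ subFam S :=
  fun _ ⟨t, hA⟩ => ⟨t, w, hA⟩

theorem famShatters_subFamW_of_famShatters_insert {S : ℕ → Bool} {A : Finset ℕ} {m : ℕ}
    (hlt : ∀ i ∈ A, i < m) (h : FamShatters (subFam S) (insert m A)) :
    FamShatters (subFamW S m) A := by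
  intro B hB
  obtain ⟨C, ⟨t, w, rfl⟩, hC⟩ := h (insert m B) (Finset.insert_subset_insert m hB)
  have hmw : m < w := ((hC m (Finset.mem_insert_self m A)).mpr (Finset.mem_insert_self m B)).1
  refine ⟨_, ⟨t, rfl⟩, fun i hi => ?_⟩
  have him : i ≠ m := (hlt i hi).ne
  have hiC := hC i (Finset.mem_insert_of_mem hi)
  simp only [Set.mem_ofPred_eq, Finset.mem_insert, him, false_or] at hiC ⊢
  rw [← hiC]
  exact ⟨fun ⟨_, hS⟩ => ⟨(hlt i hi).trans hmw, hS⟩, fun ⟨_, hS⟩ => ⟨hlt i hi, hS⟩⟩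

theorem le_SWdim_of_add_one_le_VCdim (S : ℕ → Bool) {d : ℕ} (hd : (d : ℕ∞) + 1 ≤ VCdim S) :
    (d : ℕ∞) ≤ SWdim S := by
  obtain ⟨A, hA, hcard⟩ :=
    exists_famShatters_of_lt_vcDimF (ENat.natCast_add_one_le_iff.mp hd)
  have hne : A.Nonempty := Finset.card_pos.mp (by omega)
  set m := A.max' hne
  have hmA : m ∈ A := A.max'_mem hne
  have hshatters : FamShatters (subFamW S m) (A.erase m) := by
    refine famShatters_subFamW_of_famShatters_insert (fun i hi => ?_) ?_
    · exact (A.le_max' i (Finset.mem_of_mem_erase hi)).lt_of_ne (Finset.ne_of_mem_erase hi)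
    · rwa [Finset.insert_erase hmA]
  calc (d : ℕ∞) ≤ ((A.erase m).card : ℕ∞) := by
        rw [Finset.card_erase_of_mem hmA]; exact_mod_cast Nat.le_sub_one_of_lt hcard
    _ ≤ vcDimF (subFamW S m) := hshatters.card_le_vcDimF
    _ ≤ SWdim S := le_iSup (fun w => vcDimF (subFamW S w)) m

theorem ENat.sub_one_le_of_forall_add_one_le {x y : ℕ∞}
    (h : ∀ d : ℕ, (d : ℕ∞) + 1 ≤ x → (d : ℕ∞) ≤ y) :
    x - 1 ≤ y := by
  rw [tsub_le_iff_right, ← ENat.forall_natCast_le_iff_le]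
  rintro (_ | d) hd
  · exact zero_le
  · push_cast at hd ⊢
    exact add_le_add_left (h d hd) 1

theorem SWdim_le_VCdim (S : ℕ → Bool) : SWdim S ≤ VCdim S :=
  iSup_le fun w => vcDimF_mono (subFamW_subset_subFam S w)

/-- If `VCdim S ≥ d+1` then `SWdim S ≥ d`; consequently
`VCdim S - 1 ≤ SWdim S ≤ VCdim S`. -/
theorem vcdim_swdim_bounds (S : ℕ → Bool) :
    (∀ d : ℕ, (d : ℕ∞) + 1 ≤ VCdim S → (d : ℕ∞) ≤ SWdim S) ∧
      VCdim S - 1 ≤ SWdim S ∧ SWdim S ≤ VCdim S := by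
  have hkey : ∀ d : ℕ, (d : ℕ∞) + 1 ≤ VCdim S → (d : ℕ∞) ≤ SWdim S :=
    fun _ => le_SWdim_of_add_one_le_VCdim S
  exact ⟨hkey, ENat.sub_one_le_of_forall_add_one_le hkey, SWdim_le_VCdim S⟩
end

section
/- For every binary string S, the mask dimension of S equals the sliding-window dimension of S. -/
/-- `S` admits a full `d`-mask: there are indices `i_0 < ⋯ < i_{d-1}` such that every
binary pattern of length `d` is realized by some shift `t`. -/
def HasFullMask (S : ℕ → Bool) (d : ℕ) : Prop :=
  ∃ i : Fin d → ℕ, StrictMono i ∧ ∀ b : Fin d → Bool, ∃ t : ℕ, ∀ j : Fin d, S (i j + t) = b j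

/-- The mask dimension of a binary string, as an extended natural. -/
noncomputable def Mdim (S : ℕ → Bool) : ℕ∞ :=
  sSup {n : ℕ∞ | ∃ d : ℕ, HasFullMask S d ∧ (d : ℕ∞) = n}

/-!
A full `d`-mask is the same thing as a `d`-element set `A ⊆ ℕ` such that every subset of `A`
is cut out, on `A`, by the ones of some shift of `S`. Since `A` is finite it fits in a window of
some width `w`, and then "shattered by the length-`w` substrings" says exactly the same thing.
So both dimensions are suprema of the sizes of the same sets.
-/

def IsFullMaskSet (S : ℕ → Bool) (A : Finset ℕ) : Prop :=
  ∀ B ⊆ A, ∃ t, ∀ i ∈ A, (S (i + t) = true ↔ i ∈ B)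

theorem hasFullMask_iff_exists_isFullMaskSet (S : ℕ → Bool) (d : ℕ) :
    HasFullMask S d ↔ ∃ A : Finset ℕ, A.card = d ∧ IsFullMaskSet S A := by
  constructor
  · rintro ⟨i, hi, hfull⟩
    refine ⟨Finset.univ.map ⟨i, hi.injective⟩, by simp, fun B _ => ?_⟩
    obtain ⟨t, ht⟩ := hfull fun j => decide (i j ∈ B)
    refine ⟨t, fun x hx => ?_⟩
    obtain ⟨j, -, rfl⟩ := Finset.mem_map.mp hx
    simp [ht j]
  · rintro ⟨A, hA, hfull⟩
    set i := A.orderEmbOfFin hA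
    refine ⟨i, i.strictMono, fun b => ?_⟩
    set B := (Finset.univ.filter fun j => b j = true).map i.toEmbedding
    have hBA : B ⊆ A := by
      intro x hx
      obtain ⟨j, -, rfl⟩ := Finset.mem_map.mp hx
      exact A.orderEmbOfFin_mem hA j
    obtain ⟨t, ht⟩ := hfull B hBA
    refine ⟨t, fun j => Bool.eq_iff_iff.mpr ?_⟩
    rw [ht _ (A.orderEmbOfFin_mem hA j)]
    simp [B, i]

theorem famShatters_subFamW_iff (S : ℕ → Bool) (w : ℕ) (A : Finset ℕ) :
    FamShatters (subFamW S w) A ↔ A ⊆ Finset.range w ∧ IsFullMaskSet S A := by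
  have trace_iff (t : ℕ) (i : ℕ) (hi : i < w) (P : Prop) :
      (i ∈ {i | i < w ∧ S (t + i) = true} ↔ P) ↔ (S (i + t) = true ↔ P) := by
    simp [hi, add_comm]
  constructor
  · intro h
    have hw : A ⊆ Finset.range w := fun a ha => by
      obtain ⟨_, ⟨t, rfl⟩, ht⟩ := h A le_rfl
      exact Finset.mem_range.mpr ((ht a ha).mpr ha).1
    refine ⟨hw, fun B hB => ?_⟩
    obtain ⟨_, ⟨t, rfl⟩, ht⟩ := h B hB
    exact ⟨t, fun i hi => (trace_iff t i (Finset.mem_range.mp (hw hi)) _).mp (ht i hi)⟩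
  · rintro ⟨hw, h⟩ B hB
    obtain ⟨t, ht⟩ := h B hB
    exact ⟨_, ⟨t, rfl⟩, fun i hi =>
      (trace_iff t i (Finset.mem_range.mp (hw hi)) _).mpr (ht i hi)⟩

/-- For every binary string `S`, the mask dimension equals the
sliding-window dimension. -/
theorem mdim_eq_swdim (S : ℕ → Bool) : Mdim S = SWdim S := by
  rw [Mdim, SWdim]
  simp only [vcDimF, famShatters_subFamW_iff, hasFullMask_iff_exists_isFullMaskSet]
  rw [← sSup_iUnion]
  congr 1
  ext n
  simp only [Set.mem_iUnion, Set.mem_ofPred_eq]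
  constructor
  · rintro ⟨_, ⟨A, rfl, hA⟩, rfl⟩
    obtain ⟨w, hw⟩ := A.exists_nat_subset_range
    exact ⟨w, A, ⟨hw, hA⟩, rfl⟩
  · rintro ⟨w, A, ⟨-, hA⟩, rfl⟩
    exact ⟨_, ⟨A, rfl, hA⟩, rfl⟩
end

section
/- The complexity function of the Cantor string satisfies p_x(n) = 2n − 1 for all n > 1. -/
-- The Cantor string: a 1 exactly at indices `2·∑_{k∈K} 3^k`.
open Classical in
noncomputable def cantorStr (n : ℕ) : Bool :=
  if ∃ K : Finset ℕ, n = 2 * ∑ k ∈ K, 3 ^ k then true else false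

/-- The complexity function: the number of distinct contiguous substrings of length `n`. -/
noncomputable def complexity (S : ℕ → Bool) (n : ℕ) : ℕ :=
  Nat.card {s : Fin n → Bool | ∃ t : ℕ, ∀ i : Fin n, s i = S (t + i)}

/-!
The string is the fixed point of the substitution `0 ↦ 000`, `1 ↦ 101`: `x (3q) = x (3q + 2) = x q`
and `x (3q + 1) = 0`. Hence the factor of length `n` at `3q + r` (`r < 3`) is the blow-up of the
factor of length `⌈(n + r) / 3⌉` at `q`. For `n ≥ 2` the blow-up is injective and sends only the
zero word to the zero word, and for `n ≥ 4` a nonzero factor also determines `r`, since the phase of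
its `101`/`000` blocks is visible. So the number `N n` of nonzero factors satisfies
`N n = ∑ r < 3, N ⌈(n + r) / 3⌉`, and as these three lengths add up to `n + 2`, induction from the
cases `n = 2, 3` gives `N n = 2n - 2`. Adding the zero word, which occurs at every length, gives
`2n - 1`.
-/

open Function Set

theorem Finset.sum_pow_eq_ite_add_mul_sum_preimage_succ {R : Type*} [CommSemiring R] (b : R)
    (K : Finset ℕ) :
    ∑ k ∈ K, b ^ k = (if 0 ∈ K then 1 else 0) +
      b * ∑ k ∈ K.preimage Nat.succ Nat.succ_injective.injOn, b ^ k := by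
  classical
  rw [← Finset.sum_filter_add_sum_filter_not K (· = 0), Finset.sum_filter, Finset.sum_ite_eq',
    Finset.mul_sum]
  simp_rw [← pow_succ']
  rw [Finset.sum_preimage' Nat.succ K _ (fun k => b ^ k)]
  simp [Nat.pos_iff_ne_zero]

lemma exists_three_mul_add_eq_iff (q r : ℕ) (hr : r < 3) :
    (∃ K : Finset ℕ, 3 * q + r = 2 * ∑ k ∈ K, 3 ^ k) ↔
      r ≠ 1 ∧ ∃ K : Finset ℕ, q = 2 * ∑ k ∈ K, 3 ^ k := by
  constructor
  · rintro ⟨K, hK⟩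
    rw [Finset.sum_pow_eq_ite_add_mul_sum_preimage_succ] at hK
    split_ifs at hK <;> exact ⟨by omega, K.preimage _ Nat.succ_injective.injOn, by omega⟩
  · rintro ⟨hr1, K, rfl⟩
    have hmap : ∑ k ∈ K.map ⟨Nat.succ, Nat.succ_injective⟩, 3 ^ k = 3 * ∑ k ∈ K, 3 ^ k := by
      simp [Finset.sum_map, Finset.mul_sum, pow_succ']
    obtain rfl | rfl : r = 0 ∨ r = 2 := by omega
    · exact ⟨_, by rw [hmap]; ring⟩
    · refine ⟨insert 0 (K.map ⟨Nat.succ, Nat.succ_injective⟩), ?_⟩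
      rw [Finset.sum_insert (by simp), hmap]
      ring

lemma cantorStr_eq_true_iff {t : ℕ} :
    cantorStr t = true ↔ ∃ K : Finset ℕ, t = 2 * ∑ k ∈ K, 3 ^ k := by
  simp [cantorStr]

lemma cantorStr_eq (t : ℕ) : cantorStr t = (t % 3 != 1 && cantorStr (t / 3)) := by
  have h := exists_three_mul_add_eq_iff (t / 3) (t % 3) (Nat.mod_lt t (by norm_num))
  rw [Nat.div_add_mod] at h
  exact Bool.eq_iff_iff.2 (by simp [cantorStr_eq_true_iff, h])

lemma cantorStr_of_mod_three_eq_one {t : ℕ} (h : t % 3 = 1) : cantorStr t = false := by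
  simp [cantorStr_eq t, h]

lemma cantorStr_of_mod_three_ne_one {t : ℕ} (h : t % 3 ≠ 1) : cantorStr t = cantorStr (t / 3) := by
  simp [cantorStr_eq t, h]

lemma cantorStr_succ_eq_false {t : ℕ} (ht : cantorStr t = true) : cantorStr (t + 1) = false := by
  induction t using Nat.strong_induction_on with
  | _ t ih =>
    by_cases h2 : t % 3 = 2
    · rw [cantorStr_of_mod_three_ne_one (by omega)] at ht ⊢
      rw [show (t + 1) / 3 = t / 3 + 1 by omega]
      exact ih (t / 3) (by omega) ht
    · by_cases h1 : t % 3 = 1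
      · simp [cantorStr_of_mod_three_eq_one h1] at ht
      · exact cantorStr_of_mod_three_eq_one (by omega)

lemma cantorStr_of_lt_seven {t : ℕ} (ht : t < 7) :
    cantorStr t = decide (t = 0 ∨ t = 2 ∨ t = 6) := by
  have h0 : cantorStr 0 = true := cantorStr_eq_true_iff.2 ⟨∅, rfl⟩
  have h1 : cantorStr 1 = false := cantorStr_of_mod_three_eq_one rfl
  have h2 : cantorStr 2 = true := (cantorStr_of_mod_three_ne_one (by decide)).trans h0
  interval_cases t
  · exact h0
  · exact h1
  · exact h2
  · exact (cantorStr_of_mod_three_ne_one (by decide)).trans h1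
  · exact cantorStr_of_mod_three_eq_one rfl
  · exact (cantorStr_of_mod_three_ne_one (by decide)).trans h1
  · exact (cantorStr_of_mod_three_ne_one (by decide)).trans h2

def window (S : ℕ → Bool) (n t : ℕ) : Fin n → Bool := fun i => S (t + i)

lemma complexity_eq_ncard_range_window (S : ℕ → Bool) (n : ℕ) :
    complexity S n = (range (window S n)).ncard := by
  rw [complexity, ← Nat.card_coe_set_eq]
  congr
  ext s
  simp [window, funext_iff, eq_comm]

-- The length-`n` word read from offset `r` in the image of `v` under `0 ↦ 000`, `1 ↦ 101`.
def blowUp (n : ℕ) (r : Fin 3) (v : Fin ((n + r + 2) / 3) → Bool) : Fin n → Bool :=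
  fun i => if (r + i : ℕ) % 3 = 1 then false else v ⟨(r + i) / 3, by omega⟩

section blowUp

variable {n : ℕ} {r : Fin 3} {v : Fin ((n + r + 2) / 3) → Bool}

lemma blowUp_apply_of_mod_three_eq_one {i : Fin n} (h : (r + i : ℕ) % 3 = 1) :
    blowUp n r v i = false := by
  simp [blowUp, h]

lemma blowUp_apply_eq_of_div_three_eq {i j : Fin n} (hi : (r + i : ℕ) % 3 ≠ 1)
    (hj : (r + j : ℕ) % 3 ≠ 1) (h : (r + i : ℕ) / 3 = (r + j) / 3) :
    blowUp n r v i = blowUp n r v j := by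
  simp [blowUp, hi, hj, h]

lemma blowUp_false : blowUp n r (fun _ => false) = fun _ => false := by
  funext i
  simp [blowUp]

lemma exists_forall_blowUp_apply_eq (hn : 2 ≤ n) (d : Fin ((n + r + 2) / 3)) :
    ∃ i : Fin n, ∀ v, blowUp n r v i = v d := by
  obtain ⟨i, hi, hid⟩ : ∃ i < n, (r + i) % 3 ≠ 1 ∧ (r + i) / 3 = d := by
    rcases le_or_gt (r : ℕ) (3 * d) with h | h
    · exact ⟨3 * d - r, by omega, by omega, by omega⟩
    · exact ⟨2 - r, by omega, by omega, by omega⟩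
  exact ⟨⟨i, hi⟩, fun v => by simp [blowUp, hid]⟩

lemma blowUp_injective (hn : 2 ≤ n) : Injective (blowUp n r) := by
  intro v v' h
  funext d
  obtain ⟨i, hi⟩ := exists_forall_blowUp_apply_eq hn d
  rw [← hi v, ← hi v', h]

-- A `1` at block position `0` of the `r`-parsing recurs two places to the right, where the
-- `r'`-parsing forces a `0`; near the right end, look two places to the left instead.
lemma blowUp_apply_eq_false_of_eq_blowUp (hn : 4 ≤ n) {r' : Fin 3}
    {v' : Fin ((n + r' + 2) / 3) → Bool} (h : blowUp n r v = blowUp n r' v') {i : Fin n}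
    (h0 : (r + i : ℕ) % 3 = 0) (h2 : (r' + i : ℕ) % 3 = 2) : blowUp n r v i = false := by
  by_cases hin : i + 2 < n
  · obtain ⟨j, hj⟩ : ∃ j : Fin n, (j : ℕ) = i + 2 := ⟨⟨i + 2, hin⟩, rfl⟩
    have hij : (r + i : ℕ) / 3 = (r + j) / 3 := by omega
    rw [blowUp_apply_eq_of_div_three_eq (by omega) (by omega) hij, h,
      blowUp_apply_of_mod_three_eq_one (by omega)]
  · obtain ⟨j, hj⟩ : ∃ j : Fin n, (j : ℕ) = i - 2 := ⟨⟨i - 2, by omega⟩, rfl⟩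
    have hij : (r' + i : ℕ) / 3 = (r' + j) / 3 := by omega
    rw [h, blowUp_apply_eq_of_div_three_eq (by omega) (by omega) hij, ← h,
      blowUp_apply_of_mod_three_eq_one (by omega)]

lemma blowUp_ne_blowUp (hn : 4 ≤ n) {r' : Fin 3} (hr : r ≠ r') (hv : v ≠ fun _ => false)
    (v' : Fin ((n + r' + 2) / 3) → Bool) : blowUp n r v ≠ blowUp n r' v' := by
  intro h
  obtain ⟨d, hd⟩ : ∃ d, v d = true := by simpa [funext_iff] using hv
  obtain ⟨i, hi⟩ := exists_forall_blowUp_apply_eq (by omega) d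
  have hw : blowUp n r v i = true := (hi v).trans hd
  have hw' : blowUp n r' v' i = true := h ▸ hw
  have hri : (r + i : ℕ) % 3 ≠ 1 := fun h1 => by simp [blowUp_apply_of_mod_three_eq_one h1] at hw
  have hri' : (r' + i : ℕ) % 3 ≠ 1 := fun h1 => by simp [blowUp_apply_of_mod_three_eq_one h1] at hw'
  have : (r : ℕ) ≠ r' := Fin.val_ne_of_ne hr
  rcases (by omega : (r + i : ℕ) % 3 = 0 ∧ (r' + i : ℕ) % 3 = 2 ∨
      (r' + i : ℕ) % 3 = 0 ∧ (r + i : ℕ) % 3 = 2) with ⟨h0, h2⟩ | ⟨h0, h2⟩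
  · simp [blowUp_apply_eq_false_of_eq_blowUp hn h h0 h2] at hw
  · simp [blowUp_apply_eq_false_of_eq_blowUp hn h.symm h0 h2] at hw'

end blowUp

lemma window_three_mul_add (n q : ℕ) (r : Fin 3) :
    window cantorStr n (3 * q + r) = blowUp n r (window cantorStr ((n + r + 2) / 3) q) := by
  funext i
  by_cases h : (r + i : ℕ) % 3 = 1
  · rw [blowUp_apply_of_mod_three_eq_one h]
    exact cantorStr_of_mod_three_eq_one (by omega)
  · simp only [window, blowUp, h, if_false]
    rw [cantorStr_of_mod_three_ne_one (by omega)]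
    congr 1
    omega

lemma range_window_eq_iUnion (n : ℕ) :
    range (window cantorStr n) =
      ⋃ r : Fin 3, blowUp n r '' range (window cantorStr ((n + r + 2) / 3)) := by
  ext w
  simp only [mem_range, mem_iUnion, mem_image, exists_exists_eq_and]
  constructor
  · rintro ⟨t, rfl⟩
    refine ⟨⟨t % 3, Nat.mod_lt t (by norm_num)⟩, t / 3, ?_⟩
    rw [← window_three_mul_add, Nat.div_add_mod]
  · rintro ⟨r, q, rfl⟩
    exact ⟨3 * q + r, window_three_mul_add n q r⟩

def nonzeroFactors (n : ℕ) : Set (Fin n → Bool) := range (window cantorStr n) \ {fun _ => false}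

lemma nonzeroFactors_eq_iUnion {n : ℕ} (hn : 2 ≤ n) :
    nonzeroFactors n = ⋃ r : Fin 3, blowUp n r '' nonzeroFactors ((n + r + 2) / 3) := by
  simp only [nonzeroFactors, image_sdiff (blowUp_injective hn), image_singleton, blowUp_false,
    range_window_eq_iUnion n, iUnion_sdiff]

lemma pairwise_disjoint_image_blowUp {n : ℕ} (hn : 4 ≤ n) :
    Pairwise (Disjoint on fun r : Fin 3 => blowUp n r '' nonzeroFactors ((n + r + 2) / 3)) :=
  fun _ _ hr => disjoint_image_image fun _ hv v' _ => blowUp_ne_blowUp hn hr hv.2 v'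

abbrev NoAdjacentOnes {n : ℕ} (w : Fin n → Bool) : Prop :=
  ∀ i j : Fin n, (j : ℕ) = i + 1 → w i = true → w j = false

lemma noAdjacentOnes_window (n t : ℕ) : NoAdjacentOnes (window cantorStr n t) := by
  intro i j hj hi
  simp only [window, hj, ← add_assoc] at hi ⊢
  exact cantorStr_succ_eq_false hi

lemma range_window_eq_of_le_three {n : ℕ} (hn : n ≤ 3) :
    range (window cantorStr n) = {w | NoAdjacentOnes w} := by
  -- the prefix `1010001` of the string contains every such word
  have key : ∀ w : Fin n → Bool, NoAdjacentOnes w →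
      ∃ t < 5, ∀ i : Fin n, w i = decide (t + (i : ℕ) = 0 ∨ t + (i : ℕ) = 2 ∨ t + (i : ℕ) = 6) := by
    interval_cases n <;> decide
  refine Subset.antisymm (range_subset_iff.2 (noAdjacentOnes_window n)) fun w hw => ?_
  obtain ⟨t, ht, hw⟩ := key w hw
  exact ⟨t, funext fun i => (cantorStr_of_lt_seven (by omega)).trans (hw i).symm⟩

lemma false_mem_range_window (n : ℕ) : (fun _ => false) ∈ range (window cantorStr n) := by
  induction n using Nat.strong_induction_on with
  | _ n ih =>
    rcases le_or_gt n 3 with hn | hn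
    · rw [range_window_eq_of_le_three hn]
      intro i j _ h
      simp at h
    · rw [range_window_eq_iUnion, mem_iUnion]
      exact ⟨0, _, ih _ (by omega), blowUp_false⟩

lemma ncard_nonzeroFactors_of_le_three {n : ℕ} (h2 : 2 ≤ n) (h3 : n ≤ 3) :
    (nonzeroFactors n).ncard = 2 * n - 2 := by
  rw [nonzeroFactors, range_window_eq_of_le_three h3, ncard_eq_toFinset_card']
  interval_cases n <;> decide

lemma ncard_nonzeroFactors {n : ℕ} (hn : 2 ≤ n) : (nonzeroFactors n).ncard = 2 * n - 2 := by
  induction n using Nat.strong_induction_on with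
  | _ n ih =>
    rcases le_or_gt n 3 with h3 | h4
    · exact ncard_nonzeroFactors_of_le_three hn h3
    have hcard (r : Fin 3) : (blowUp n r '' nonzeroFactors ((n + r + 2) / 3)).ncard =
        2 * ((n + r + 2) / 3) - 2 := by
      rw [(blowUp_injective hn).injOn.ncard_image, ih _ (by omega) (by omega)]
    rw [nonzeroFactors_eq_iUnion hn, ncard_iUnion_of_finite (fun _ => toFinite _)
      (pairwise_disjoint_image_blowUp h4), finsum_eq_sum_of_fintype, Fin.sum_univ_three, hcard,
      hcard, hcard]
    simp only [Fin.isValue, Fin.coe_ofNat_eq_mod, Nat.zero_mod, Nat.one_mod, Nat.mod_succ]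
    omega

/-- The complexity function of the Cantor string satisfies
`p_x(n) = 2n - 1` for all `n > 1`. -/
theorem cantor_complexity (n : ℕ) (hn : 1 < n) : complexity cantorStr n = 2 * n - 1 := by
  rw [complexity_eq_ncard_range_window,
    ← ncard_sdiff_singleton_add_one (false_mem_range_window n) (toFinite _)]
  rw [← nonzeroFactors, ncard_nonzeroFactors hn]
  omega
end

section
/- The Thue–Morse sequence has infinite mask dimension. -/
/-- A predicate `P` on `ℕ` (viewed as a binary string) admits a full `d`-mask. -/
def HasFullMaskP (P : ℕ → Prop) (d : ℕ) : Prop :=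
  ∃ i : Fin d → ℕ, StrictMono i ∧
    ∀ b : Fin d → Bool, ∃ t : ℕ, ∀ j : Fin d, (P (i j + t) ↔ b j = true)

/-- The Thue–Morse sequence: `T n = 1` iff the binary representation of `n` has an
odd number of 1's. -/
def thueMorse (n : ℕ) : Prop := Odd ((Nat.digits 2 n).count 1)

/-!
Use the mask `4⁰, 4¹, …, 4^(d-1)` and shifts `t = ∑ k ∈ S, 4 ^ k` for finite sets `S`.
Since `T (4n + r) = T n` for `r = 0` and `T (4n + r) = ¬ T n` for `r = 1, 2`, `T` of a number
whose base-4 digits are at most `2` is the parity of its number of nonzero digits. Adding `4 ^ j`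
to `t` turns the digit `0` or `1` at position `j` into `1` or `2`, so `T (4 ^ j + t)` holds iff
`#(insert j S)` is odd. Taking `#S` odd, this says exactly `j ∈ S`, and any pattern on `j < d`
is realised by such an `S`, adding the extra element `d` if needed.
-/

open Finset

lemma thueMorse_two_mul (n : ℕ) : thueMorse (2 * n) ↔ thueMorse n := by
  rcases eq_or_ne n 0 with rfl | hn
  · simp
  · unfold thueMorse
    rw [Nat.digits_def' (by norm_num) (by omega)]
    simp

lemma thueMorse_two_mul_add_one (n : ℕ) : thueMorse (2 * n + 1) ↔ ¬ thueMorse n := by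
  unfold thueMorse
  rw [Nat.digits_def' (by norm_num) (by omega)]
  simp [Nat.mul_add_div, Nat.odd_add_one]

lemma thueMorse_four_mul_add {r : ℕ} (n : ℕ) (hr : r ≤ 2) :
    thueMorse (4 * n + r) ↔ (thueMorse n ↔ r = 0) := by
  interval_cases r
  · rw [show 4 * n + 0 = 2 * (2 * n) by ring, thueMorse_two_mul, thueMorse_two_mul]
    simp
  · rw [show 4 * n + 1 = 2 * (2 * n) + 1 by ring, thueMorse_two_mul_add_one, thueMorse_two_mul]
    simp
  · rw [show 4 * n + 2 = 2 * (2 * n + 1) by ring, thueMorse_two_mul, thueMorse_two_mul_add_one]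
    simp

lemma thueMorse_sum_digit_mul_four_pow (m : ℕ) {c : ℕ → ℕ} (hc : ∀ k, c k ≤ 2) :
    thueMorse (∑ k ∈ range m, c k * 4 ^ k) ↔ Odd #{k ∈ range m | c k ≠ 0} := by
  induction m generalizing c with
  | zero => simp [thueMorse]
  | succ m ih =>
    have hsum : ∑ k ∈ range (m + 1), c k * 4 ^ k
        = 4 * ∑ k ∈ range m, c (k + 1) * 4 ^ k + c 0 := by
      rw [sum_range_succ', mul_sum]
      simp only [pow_succ, pow_zero, mul_one]
      congr 1
      exact sum_congr rfl fun k _ => by ring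
    rw [hsum, thueMorse_four_mul_add _ (hc 0), ih fun k => hc (k + 1), card_filter, card_filter,
      sum_range_succ']
    by_cases h0 : c 0 = 0 <;> simp [h0, Nat.odd_add_one]

lemma thueMorse_sum_four_pow_add_sum_four_pow (S U : Finset ℕ) :
    thueMorse (∑ k ∈ S, 4 ^ k + ∑ k ∈ U, 4 ^ k) ↔ Odd #(S ∪ U) := by
  obtain ⟨m, hm⟩ := exists_nat_subset_range (S ∪ U)
  have hS : S ⊆ range m := subset_union_left.trans hm
  have hU : U ⊆ range m := subset_union_right.trans hm
  let c : ℕ → ℕ := fun k => (if k ∈ S then 1 else 0) + if k ∈ U then 1 else 0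
  have hsum : ∑ k ∈ S, 4 ^ k + ∑ k ∈ U, 4 ^ k = ∑ k ∈ range m, c k * 4 ^ k := by
    simp only [c, add_mul, sum_add_distrib, ite_mul, one_mul, zero_mul, sum_ite_mem,
      inter_eq_right.mpr hS, inter_eq_right.mpr hU]
  have hsupport : {k ∈ range m | c k ≠ 0} = S ∪ U := by
    ext k
    have hk : k ∈ S ∨ k ∈ U → k ∈ range m := fun h => hm (mem_union.2 h)
    by_cases hkS : k ∈ S <;> by_cases hkU : k ∈ U <;> simp_all [c]
  rw [hsum, thueMorse_sum_digit_mul_four_pow m fun k => by simp only [c]; split_ifs <;> omega,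
    hsupport]

lemma thueMorse_four_pow_add_sum_four_pow (j : ℕ) (S : Finset ℕ) :
    thueMorse (4 ^ j + ∑ k ∈ S, 4 ^ k) ↔ (j ∈ S ↔ Odd #S) := by
  rw [← sum_singleton (fun k => 4 ^ k) j, thueMorse_sum_four_pow_add_sum_four_pow,
    singleton_union]
  by_cases hj : j ∈ S
  · simp [hj]
  · simp [hj, card_insert_of_notMem, Nat.odd_add_one]

lemma exists_odd_card_forall_lt_mem_iff (A : Finset ℕ) (n : ℕ) :
    ∃ S : Finset ℕ, Odd #S ∧ ∀ k < n, (k ∈ S ↔ k ∈ A) := by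
  set B := A.filter (· < n)
  have hB : ∀ k < n, (k ∈ B ↔ k ∈ A) := fun k hk => by simp [B, hk]
  by_cases hodd : Odd #B
  · exact ⟨B, hodd, hB⟩
  · have hn : n ∉ B := by simp [B]
    refine ⟨insert n B, ?_, fun k hk => ?_⟩
    · rwa [card_insert_of_notMem hn, Nat.odd_add_one]
    · rw [mem_insert, hB k hk, or_iff_right hk.ne]

/-- The Thue–Morse sequence has infinite mask dimension. -/
theorem thueMorse_infinite_mask_dimension : ∀ d : ℕ, HasFullMaskP thueMorse d := by
  intro d
  refine ⟨fun j => 4 ^ (j : ℕ), fun j j' h => Nat.pow_lt_pow_right (by norm_num) h, fun b => ?_⟩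
  obtain ⟨S, hS, hSb⟩ :=
    exists_odd_card_forall_lt_mem_iff ((univ.filter (b · = true)).map Fin.valEmbedding) d
  refine ⟨∑ k ∈ S, 4 ^ k, fun j => ?_⟩
  rw [thueMorse_four_pow_add_sum_four_pow, hSb j j.isLt]
  simp [hS, Fin.val_inj]
end

section
/- The infinite binary string with a 1 exactly at indices that are powers of two has mask dimension exactly 2. -/
/-- The string with a 1 exactly at indices that are powers of two. -/
def powersOfTwo (n : ℕ) : Prop := ∃ k : ℕ, n = 2 ^ k

lemma not_powersOfTwo_of_lt_of_lt {n k : ℕ} (h₁ : 2 ^ k < n) (h₂ : n < 2 ^ (k + 1)) :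
    ¬ powersOfTwo n := by
  rintro ⟨j, rfl⟩
  have := (Nat.pow_lt_pow_iff_right (by norm_num)).mp h₁
  have := (Nat.pow_lt_pow_iff_right (by norm_num)).mp h₂
  omega

namespace powersOfTwo

lemma pos {n : ℕ} (hn : powersOfTwo n) : 0 < n := by
  obtain ⟨k, rfl⟩ := hn
  positivity

lemma two_mul_dvd_of_lt {m n : ℕ} (hm : powersOfTwo m) (hn : powersOfTwo n) (h : m < n) :
    2 * m ∣ n := by
  obtain ⟨p, rfl⟩ := hm
  obtain ⟨q, rfl⟩ := hn
  rw [← pow_succ']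
  exact Nat.pow_dvd_pow 2 ((Nat.pow_lt_pow_iff_right (by norm_num)).mp h)

lemma eq_of_add {a m n : ℕ} (ha : 0 < a) (hm : powersOfTwo m) (hma : powersOfTwo (m + a))
    (hn : powersOfTwo n) (hna : powersOfTwo (n + a)) : m = n := by
  wlog hlt : m < n generalizing m n
  · rcases (not_lt.mp hlt).lt_or_eq with h | h
    · exact (this hn hna hm hma h).symm
    · exact h.symm
  have hdvd_n : 2 * m ∣ n := hm.two_mul_dvd_of_lt hn hlt
  have hdvd_na : 2 * m ∣ n + a :=
    (hdvd_n.trans (Dvd.intro_left 2 rfl)).trans (hn.two_mul_dvd_of_lt hna (by omega))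
  have hdvd_ma : 2 * m ∣ m + a := hm.two_mul_dvd_of_lt hma (by omega)
  have hdvd_a : 2 * m ∣ a := (Nat.dvd_add_right hdvd_n).mp hdvd_na
  have hdvd_m : 2 * m ∣ m := (Nat.dvd_add_left hdvd_a).mp hdvd_ma
  have hm_pos := hm.pos
  have := Nat.le_of_dvd hm_pos hdvd_m
  omega

end powersOfTwo

lemma HasFullMaskP.le_two {P : ℕ → Prop} {d : ℕ} (hP : HasFullMaskP P d)
    (h_gap : ∀ {a m n : ℕ}, 0 < a → P m → P (m + a) → P n → P (n + a) → m = n) : d ≤ 2 := by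
  by_contra! hd
  obtain ⟨i, hi, hmask⟩ := hP
  let j₀ : Fin d := ⟨0, by omega⟩
  let j₁ : Fin d := ⟨1, by omega⟩
  let j₂ : Fin d := ⟨2, by omega⟩
  obtain ⟨t, ht⟩ := hmask fun _ => true
  obtain ⟨t', ht'⟩ := hmask fun j => decide (j ≠ j₂)
  have hlt : i j₀ < i j₁ := hi (Fin.mk_lt_mk.mpr zero_lt_one)
  have hgap : ∀ s, i j₁ + s = i j₀ + s + (i j₁ - i j₀) := fun s => by omega
  have hP₀ := (ht j₀).mpr rfl
  have hP₁ := (ht j₁).mpr rfl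
  have hP₀' := (ht' j₀).mpr (by simp [j₀, j₂])
  have hP₁' := (ht' j₁).mpr (by simp [j₁, j₂])
  rw [hgap] at hP₁ hP₁'
  have hsame : t = t' := by
    have := h_gap (by omega) hP₀ hP₁ hP₀' hP₁'
    omega
  have := (ht' j₂).mp (hsame ▸ (ht j₂).mpr rfl)
  simp at this

theorem hasFullMaskP_powersOfTwo_two : HasFullMaskP powersOfTwo 2 := by
  refine ⟨![0, 1], by decide, fun b => ?_⟩
  have h₁ : powersOfTwo 1 := ⟨0, rfl⟩
  have h₂ : powersOfTwo 2 := ⟨1, rfl⟩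
  have h₄ : powersOfTwo 4 := ⟨2, rfl⟩
  have h₃ : ¬ powersOfTwo 3 := not_powersOfTwo_of_lt_of_lt (k := 1) (by norm_num) (by norm_num)
  have h₅ : ¬ powersOfTwo 5 := not_powersOfTwo_of_lt_of_lt (k := 2) (by norm_num) (by norm_num)
  have h₆ : ¬ powersOfTwo 6 := not_powersOfTwo_of_lt_of_lt (k := 2) (by norm_num) (by norm_num)
  obtain ⟨t, ht₀, ht₁⟩ : ∃ t, (powersOfTwo t ↔ b 0 = true) ∧ (powersOfTwo (t + 1) ↔ b 1 = true) := by
    cases b 0 <;> cases b 1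
    · exact ⟨5, by simpa using h₅, by simpa using h₆⟩
    · exact ⟨3, by simpa using h₃, by simpa using h₄⟩
    · exact ⟨4, by simpa using h₄, by simpa using h₅⟩
    · exact ⟨1, by simpa using h₁, by simpa using h₂⟩
  refine ⟨t, Fin.forall_fin_two.mpr ⟨?_, ?_⟩⟩
  · simpa using ht₀
  · simpa [add_comm] using ht₁

/-- The binary string supported on the powers of two has mask
dimension exactly 2. -/
theorem powersOfTwo_mask_dimension_two :
    HasFullMaskP powersOfTwo 2 ∧ ∀ d : ℕ, HasFullMaskP powersOfTwo d → d ≤ 2 :=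
  ⟨hasFullMaskP_powersOfTwo_two, fun _ hd => hd.le_two powersOfTwo.eq_of_add⟩
end

section
/- If A ⊆ ℕ is a Sidon set, then the binary string with 1's exactly at indices in A admits no full 3-mask; hence its mask dimension is at most 2. -/
/-!
Proof idea: the patterns `111` and `110` of a full 3-mask `i₀ < i₁ < i₂` are realized at two
shifts `t ≠ s`, so the difference `i₁ - i₀` is realized by the two distinct pairs
`(i₀ + t, i₁ + t)` and `(i₀ + s, i₁ + s)` of elements of `A`, which a Sidon set forbids.
A full `d`-mask with `d ≥ 3` restricts to a full 3-mask.
-/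

theorem HasFullMaskP.mono {P : ℕ → Prop} {d e : ℕ} (h : HasFullMaskP P d) (hed : e ≤ d) :
    HasFullMaskP P e := by
  obtain ⟨i, hi, hfull⟩ := h
  refine ⟨i ∘ Fin.castLE hed, hi.comp (Fin.strictMono_castLE hed), fun b => ?_⟩
  obtain ⟨t, ht⟩ := hfull fun j => if hj : (j : ℕ) < e then b ⟨j, hj⟩ else false
  exact ⟨t, fun j => by simpa [j.isLt] using ht (Fin.castLE hed j)⟩

theorem HasFullMaskP.exists_two_shifts {P : ℕ → Prop} (h : HasFullMaskP P 3) :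
    ∃ a b, a < b ∧ ∃ t s, t ≠ s ∧ P (a + t) ∧ P (b + t) ∧ P (a + s) ∧ P (b + s) := by
  obtain ⟨i, hi, hfull⟩ := h
  obtain ⟨t, ht⟩ := hfull ![true, true, true]
  obtain ⟨s, hs⟩ := hfull ![true, true, false]
  have hts : t ≠ s := by
    rintro rfl
    simpa using (hs 2).mp ((ht 2).mpr rfl)
  exact ⟨i 0, i 1, hi (by decide), t, s, hts,
    (ht 0).mpr rfl, (ht 1).mpr rfl, (hs 0).mpr rfl, (hs 1).mpr rfl⟩

/-- If `A ⊆ ℕ` is a Sidon set, then the binary string with 1's exactly at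
indices in `A` admits no full 3-mask (hence its mask dimension is at most 2). -/
theorem sidon_no_full_three_mask (A : Set ℕ)
    (hSidon : ∀ d : ℕ, 0 < d → ∀ a b a' b' : ℕ, a ∈ A → b ∈ A → a' ∈ A → b' ∈ A →
      a < b → a' < b' → b - a = d → b' - a' = d → a = a' ∧ b = b') :
    (¬ HasFullMaskP (· ∈ A) 3) ∧ ∀ d : ℕ, HasFullMaskP (· ∈ A) d → d ≤ 2 := by
  have hno3 : ¬ HasFullMaskP (· ∈ A) 3 := fun h => by
    obtain ⟨a, b, hab, t, s, hts, hat, hbt, has, hbs⟩ := h.exists_two_shifts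
    have := hSidon (b - a) (by omega) (a + t) (b + t) (a + s) (b + s)
      hat hbt has hbs (by omega) (by omega) (by omega) (by omega)
    omega
  exact ⟨hno3, fun d hd => by
    by_contra! hd3
    exact hno3 (hd.mono hd3)⟩
end

section
/- For any d ∈ ℕ and any sequence of real numbers r_i, each of VC dimension at most d, converging to a limit r*, the VC dimension of r* is at most d. -/
/-- The binary digit string of a real number `r`: sign and binary point are ignored,
the integer digits (most significant first) are followed by the fractional digits, and
for dyadic rationals the representation ending in `0*` is chosen. -/
noncomputable def rdigit (r : ℝ) (n : ℕ) : Bool :=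
  let x : ℝ := |r|
  let m : ℤ := if x < 1 then 0 else (Nat.log 2 ⌊x⌋₊ + 1 : ℤ)
  decide (⌊x * 2 ^ ((n : ℤ) + 1 - m)⌋ % 2 = 1)

/-- The VC dimension of a real number: the VC dimension of its binary digit string. -/
noncomputable def VCdimR (r : ℝ) : ℕ∞ := VCdim (rdigit r)

open Filter Topology

lemma le_vcDimF {F : Set (Set ℕ)} {A : Finset ℕ} (hA : FamShatters F A) :
    (A.card : ℕ∞) ≤ vcDimF F :=
  le_sSup ⟨A, hA, rfl⟩

lemma lt_vcDimF_iff {F : Set (Set ℕ)} {n : ℕ∞} :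
    n < vcDimF F ↔ ∃ A : Finset ℕ, FamShatters F A ∧ n < A.card := by
  simp only [vcDimF, lt_sSup_iff, Set.mem_ofPred_eq]
  constructor
  · rintro ⟨_, ⟨A, hA, rfl⟩, hn⟩
    exact ⟨A, hA, hn⟩
  · rintro ⟨A, hA, hn⟩
    exact ⟨_, ⟨A, hA, rfl⟩, hn⟩

lemma lowerSemicontinuous_vcDimF {X : Type*} [TopologicalSpace X] {F : X → Set (Set ℕ)}
    (hF : ∀ x A, FamShatters (F x) A →
      ∀ᶠ y in 𝓝 x, ∃ A' : Finset ℕ, A'.card = A.card ∧ FamShatters (F y) A') :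
    LowerSemicontinuous fun x => vcDimF (F x) := by
  intro x n hn
  obtain ⟨A, hA, hnA⟩ := lt_vcDimF_iff.1 hn
  filter_upwards [hF x A hA] with y ⟨A', hcard, hA'⟩
  exact hnA.trans_le (hcard ▸ le_vcDimF hA')

lemma famShatters_subFam_iff {S : ℕ → Bool} {A : Finset ℕ} :
    FamShatters (subFam S) A ↔
      ∀ B ⊆ A, ∃ t w : ℕ, ∀ i ∈ A, (i < w ∧ S (t + i) = true ↔ i ∈ B) := by
  simp only [FamShatters, subFam, Set.mem_ofPred_eq]
  refine forall₂_congr fun B _ => ⟨?_, ?_⟩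
  · rintro ⟨_, ⟨t, w, rfl⟩, h⟩
    exact ⟨t, w, h⟩
  · rintro ⟨t, w, h⟩
    exact ⟨_, ⟨t, w, rfl⟩, h⟩

lemma famShatters_subFam_empty (S : ℕ → Bool) : FamShatters (subFam S) ∅ :=
  famShatters_subFam_iff.2 fun _ _ => ⟨0, 0, by simp⟩

lemma FamShatters.exists_eq_true {S : ℕ → Bool} {A : Finset ℕ} (hA : FamShatters (subFam S) A)
    (hne : A.Nonempty) : ∃ k, S k = true := by
  obtain ⟨a, ha⟩ := hne
  obtain ⟨t, w, h⟩ := famShatters_subFam_iff.1 hA A subset_rfl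
  exact ⟨t + a, ((h a ha).2 ha).2⟩

lemma FamShatters.exists_forall_eq_prefix {S : ℕ → Bool} {A : Finset ℕ}
    (hA : FamShatters (subFam S) A) :
    ∃ N, ∀ S' : ℕ → Bool, (∀ k < N, S' k = S k) → FamShatters (subFam S') A := by
  classical
  choose! t w htw using famShatters_subFam_iff.1 hA
  refine ⟨A.powerset.sup t + A.sup id + 1, fun S' hS' => famShatters_subFam_iff.2 fun B hB =>
    ⟨t B, w B, fun i hi => ?_⟩⟩
  have ht : t B ≤ A.powerset.sup t := Finset.le_sup (Finset.mem_powerset.2 hB)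
  have hi' : i ≤ A.sup id := Finset.le_sup (f := id) hi
  rw [hS' _ (by omega)]
  exact htw B hB i hi

/-- Replace the largest element `a` of `A` by `M + 1`. A window of `D` containing `a` starts at
some `t ≤ M - a`; the window of `E` starting at `t` agrees with it below offset `a`, and has a `1`
at offset `M + 1` since `M < t + M + 1 ≤ 2 * M + 1`. -/
lemma exists_famShatters_subFam_of_tail {D E : ℕ → Bool} {M : ℕ} (hED : ∀ k < M, E k = D k)
    (hD : ∀ k, M < k → D k = false) (hE : ∀ k, M < k → k ≤ 2 * M + 1 → E k = true)
    {A : Finset ℕ} (hA : FamShatters (subFam D) A) :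
    ∃ A' : Finset ℕ, A'.card = A.card ∧ FamShatters (subFam E) A' := by
  classical
  rcases A.eq_empty_or_nonempty with rfl | hne
  · exact ⟨∅, rfl, famShatters_subFam_empty E⟩
  set a := A.max' hne
  have haA : a ∈ A := A.max'_mem hne
  have hlt : ∀ i ∈ A.erase a, i < a := fun i hi =>
    (A.le_max' i (Finset.mem_of_mem_erase hi)).lt_of_ne (Finset.ne_of_mem_erase hi)
  have hwindow : ∀ B ⊆ A.erase a,
      ∃ t, t + a ≤ M ∧ ∀ i ∈ A.erase a, (E (t + i) = true ↔ i ∈ B) := by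
    intro B hB
    obtain ⟨t, w, h⟩ := famShatters_subFam_iff.1 hA (insert a B)
      (Finset.insert_subset haA (hB.trans (Finset.erase_subset a A)))
    obtain ⟨haw, hta⟩ := (h a haA).2 (Finset.mem_insert_self a B)
    have htM : t + a ≤ M := not_lt.1 fun hM => by simp [hD _ hM] at hta
    refine ⟨t, htM, fun i hi => ?_⟩
    have hia := hlt i hi
    have hiB := h i (Finset.mem_of_mem_erase hi)
    rw [Finset.mem_insert, or_iff_right (Finset.ne_of_mem_erase hi)] at hiB
    rw [hED _ (by omega)]
    exact ⟨fun hD' => hiB.1 ⟨by omega, hD'⟩, fun hiB' => (hiB.2 hiB').2⟩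
  have hM : M + 1 ∉ A.erase a := fun hM => by
    obtain ⟨t, ht, -⟩ := hwindow ∅ (Finset.empty_subset _)
    have := hlt _ hM
    omega
  refine ⟨insert (M + 1) (A.erase a), ?_, famShatters_subFam_iff.2 fun B hB => ?_⟩
  · rw [Finset.card_insert_of_notMem hM, Finset.card_erase_add_one haA]
  obtain ⟨t, htM, ht⟩ := hwindow (B.erase (M + 1)) fun i hi =>
    (Finset.mem_insert.1 (hB (Finset.mem_of_mem_erase hi))).resolve_left
      (Finset.ne_of_mem_erase hi)
  refine ⟨t, if M + 1 ∈ B then M + 2 else M + 1, fun i hi => ?_⟩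
  rcases Finset.mem_insert.1 hi with rfl | hi
  · rw [hE _ (by omega) (by omega)]
    split_ifs <;> simp_all
  · have hia := hlt i hi
    have hiM : i ≠ M + 1 := by omega
    rw [ht i hi, Finset.mem_erase]
    split_ifs <;> exact ⟨fun h => h.2.2, fun h => ⟨by omega, hiM, h⟩⟩

lemma rdigit_abs (r : ℝ) : rdigit |r| = rdigit r := by
  funext n
  simp only [rdigit, abs_abs]

lemma size_eq_log_add_one {n : ℕ} (hn : n ≠ 0) : Nat.size n = Nat.log 2 n + 1 :=
  le_antisymm (Nat.size_le.2 (Nat.lt_pow_succ_log_self one_lt_two n))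
    (Nat.succ_le_of_lt (lt_of_not_ge fun h => (Nat.pow_log_le_self 2 hn).not_gt (Nat.size_le.1 h)))

lemma size_floor_le_iff {x : ℝ} (hx : 0 ≤ x) {n : ℕ} : Nat.size ⌊x⌋₊ ≤ n ↔ x < 2 ^ n := by
  rw [Nat.size_le, Nat.floor_lt hx]
  push_cast
  rfl

lemma size_floor_two_pow (j : ℕ) : Nat.size ⌊(2 : ℝ) ^ j⌋₊ = j + 1 := by
  rw [← Nat.cast_ofNat, ← Nat.cast_pow, Nat.floor_natCast, Nat.size_pow]

/-- `Nat.size ⌊x⌋₊` is the number of binary digits of the integer part of `x`, so `x / 2 ^ size`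
lies in `[0, 1)` and the digit string of `x` is the digit string of this fraction. -/
lemma rdigit_of_nonneg {x : ℝ} (hx : 0 ≤ x) (k : ℕ) :
    rdigit x k = decide (⌊x * (2 ^ (k + 1) / 2 ^ Nat.size ⌊x⌋₊)⌋ % 2 = 1) := by
  have hexp : (if x < 1 then 0 else (Nat.log 2 ⌊x⌋₊ + 1 : ℤ)) = Nat.size ⌊x⌋₊ := by
    split_ifs with h
    · rw [Nat.floor_eq_zero.2 h, Nat.size_zero, Nat.cast_zero]
    · rw [size_eq_log_add_one (Nat.floor_pos.2 (not_lt.1 h)).ne', Nat.cast_succ]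
  simp only [rdigit, abs_of_nonneg hx, hexp]
  rw [zpow_sub₀ two_ne_zero, ← Nat.cast_succ, zpow_natCast, zpow_natCast]

lemma mul_two_pow_div_of_le (x : ℝ) (m : ℕ) {k l : ℕ} (hkl : k ≤ l) :
    x * (2 ^ (l + 1) / 2 ^ m) = x * (2 ^ (k + 1) / 2 ^ m) * 2 ^ (l - k) := by
  obtain ⟨d, rfl⟩ := Nat.exists_eq_add_of_le hkl
  rw [Nat.add_sub_cancel_left, add_right_comm, pow_add]
  ring

lemma rdigit_eq_false_of_mul_eq_intCast {x : ℝ} (hx : 0 ≤ x) {k : ℕ} {n : ℤ}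
    (hn : x * (2 ^ (k + 1) / 2 ^ Nat.size ⌊x⌋₊) = n) {l : ℕ} (hkl : k < l) :
    rdigit x l = false := by
  have heven : n * 2 ^ (l - k) % 2 = 0 :=
    Int.emod_eq_zero_of_dvd (dvd_mul_of_dvd_right (dvd_pow_self 2 (by omega)) n)
  have hcast : (n : ℝ) * 2 ^ (l - k) = ((n * 2 ^ (l - k) : ℤ) : ℝ) := by push_cast; rfl
  rw [rdigit_of_nonneg hx, mul_two_pow_div_of_le x _ hkl.le, hn, hcast, Int.floor_intCast, heven]
  rfl

lemma rdigit_two_pow_eq_false (j : ℕ) {l : ℕ} (hl : 0 < l) : rdigit (2 ^ j) l = false := by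
  refine rdigit_eq_false_of_mul_eq_intCast (by positivity) (n := 1) ?_ hl
  rw [size_floor_two_pow, Int.cast_one]
  field_simp
  ring

lemma floor_eq_self_of_forall_floor_mul_two_pow_even {v : ℝ}
    (h : ∀ i : ℕ, ⌊v * 2 ^ (i + 1)⌋ % 2 = 0) : (⌊v⌋ : ℝ) = v := by
  have hpow : ∀ i : ℕ, ⌊v * 2 ^ i⌋ = ⌊v⌋ * 2 ^ i := by
    intro i
    induction i with
    | zero => simp
    | succ i ih =>
      have hlo : 2 * ⌊v * 2 ^ i⌋ ≤ ⌊v * 2 ^ (i + 1)⌋ := Int.le_floor.2 (by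
        push_cast
        rw [pow_succ]
        linarith [Int.floor_le (v * 2 ^ i)])
      have hhi : ⌊v * 2 ^ (i + 1)⌋ < 2 * ⌊v * 2 ^ i⌋ + 2 := Int.floor_lt.2 (by
        push_cast
        rw [pow_succ]
        linarith [Int.lt_floor_add_one (v * 2 ^ i)])
      rw [pow_succ (2 : ℤ), ← mul_assoc, ← ih]
      have := h i
      omega
  by_contra hne
  have hfract : 0 < v - ⌊v⌋ := sub_pos.2 ((Int.floor_le v).lt_of_ne hne)
  obtain ⟨i, hi⟩ := pow_unbounded_of_one_lt (v - ⌊v⌋)⁻¹ one_lt_two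
  have hlt : v * 2 ^ i < ⌊v⌋ * 2 ^ i + 1 := by
    exact_mod_cast (hpow i ▸ Int.lt_floor_add_one (v * 2 ^ i))
  rw [inv_lt_iff_one_lt_mul₀ hfract] at hi
  nlinarith

lemma exists_mul_eq_intCast_of_tail {x : ℝ} (hx : 0 ≤ x) {M : ℕ}
    (htail : ∀ k, M < k → rdigit x k = false) :
    ∃ K : ℤ, x * (2 ^ (M + 1) / 2 ^ Nat.size ⌊x⌋₊) = K := by
  refine ⟨_, (floor_eq_self_of_forall_floor_mul_two_pow_even fun i => ?_).symm⟩
  have := htail (M + (i + 1)) (by omega)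
  rw [rdigit_of_nonneg hx, mul_two_pow_div_of_le x _ (Nat.le_add_right M (i + 1)),
    Nat.add_sub_cancel_left] at this
  simpa using this

lemma eventually_floor_mul_eq_nhdsGE (x : ℝ) {c : ℝ} (hc : 0 < c) :
    ∀ᶠ y in 𝓝[≥] x, ⌊y * c⌋ = ⌊x * c⌋ := by
  have hx : x < (⌊x * c⌋ + 1) / c := (lt_div_iff₀ hc).2 (Int.lt_floor_add_one _)
  filter_upwards [Ico_mem_nhdsGE hx] with y ⟨hxy, hy⟩
  rw [Int.floor_eq_iff]
  exact ⟨(Int.floor_le _).trans (by gcongr), (lt_div_iff₀ hc).1 hy⟩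

/-- From the left of `x`, `⌊y * c⌋` settles at `⌈x * c⌉ - 1`: this is `⌊x * c⌋` unless `x * c` is
an integer, in which case it drops by one. -/
lemma eventually_floor_mul_eq_nhdsLT (x : ℝ) {c : ℝ} (hc : 0 < c) :
    ∀ᶠ y in 𝓝[<] x, ⌊y * c⌋ = ⌈x * c⌉ - 1 := by
  have hx : (⌈x * c⌉ - 1 : ℝ) / c < x :=
    (div_lt_iff₀ hc).2 (by linarith [Int.ceil_lt_add_one (x * c)])
  filter_upwards [Ioo_mem_nhdsLT hx] with y ⟨hy, hyx⟩
  rw [Int.floor_eq_iff]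
  push_cast
  exact ⟨((div_lt_iff₀ hc).1 hy).le,
    by linarith [Int.le_ceil (x * c), mul_lt_mul_of_pos_right hyx hc]⟩

lemma eventually_size_floor_eq_nhdsGE (x : ℝ) :
    ∀ᶠ y in 𝓝[≥] x, Nat.size ⌊y⌋₊ = Nat.size ⌊x⌋₊ := by
  filter_upwards [eventually_floor_mul_eq_nhdsGE x one_pos] with y hy
  rw [mul_one, mul_one] at hy
  rw [← Int.floor_toNat, hy, Int.floor_toNat]

lemma eventually_size_floor_eq_nhdsLT {x : ℝ} (hx : 0 < x) (hpow : ∀ j : ℕ, x ≠ 2 ^ j) :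
    ∀ᶠ y in 𝓝[<] x, Nat.size ⌊y⌋₊ = Nat.size ⌊x⌋₊ := by
  have hxe : x < 2 ^ Nat.size ⌊x⌋₊ := (size_floor_le_iff hx.le).1 le_rfl
  rcases h : Nat.size ⌊x⌋₊ with _ | j
  · filter_upwards [Ioo_mem_nhdsLT hx] with y ⟨hy, hyx⟩
    rw [h] at hxe
    exact Nat.le_zero.1 ((size_floor_le_iff hy.le).2 (hyx.trans hxe))
  · have hjx : 2 ^ j < x := (not_lt.1 fun hlt => by
      have := (size_floor_le_iff hx.le).2 hlt
      omega).lt_of_ne (hpow j).symm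
    filter_upwards [Ioo_mem_nhdsLT hjx] with y ⟨hjy, hyx⟩
    have hy : 0 ≤ y := (pow_pos two_pos j).le.trans hjy.le
    rw [h] at hxe
    have hle := (size_floor_le_iff hy).2 (hyx.trans hxe)
    have hgt : ¬ Nat.size ⌊y⌋₊ ≤ j := fun hle' => ((size_floor_le_iff hy).1 hle').not_gt hjy
    omega

lemma eventually_rdigit_eq_nhdsGE {x : ℝ} (hx : 0 ≤ x) (k : ℕ) :
    ∀ᶠ y in 𝓝[≥] x, rdigit y k = rdigit x k := by
  filter_upwards [self_mem_nhdsWithin, eventually_size_floor_eq_nhdsGE x,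
    eventually_floor_mul_eq_nhdsGE x (c := 2 ^ (k + 1) / 2 ^ Nat.size ⌊x⌋₊) (by positivity)]
    with y hxy hsize hfloor
  rw [rdigit_of_nonneg (hx.trans hxy), rdigit_of_nonneg hx, hsize, hfloor]

lemma eventually_rdigit_nhdsLT {x : ℝ} (hx : 0 < x) (hpow : ∀ j : ℕ, x ≠ 2 ^ j) (k : ℕ) :
    ∀ᶠ y in 𝓝[<] x,
      rdigit y k = decide ((⌈x * (2 ^ (k + 1) / 2 ^ Nat.size ⌊x⌋₊)⌉ - 1) % 2 = 1) := by
  filter_upwards [Ioo_mem_nhdsLT hx, eventually_size_floor_eq_nhdsLT hx hpow,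
    eventually_floor_mul_eq_nhdsLT x (c := 2 ^ (k + 1) / 2 ^ Nat.size ⌊x⌋₊) (by positivity)]
    with y hy hsize hfloor
  rw [rdigit_of_nonneg hy.1.le, hsize, hfloor]

lemma eventually_rdigit_eq_nhdsLT_of_mul_ne_intCast {x : ℝ} (hx : 0 < x)
    (hpow : ∀ j : ℕ, x ≠ 2 ^ j) {k : ℕ}
    (hk : ∀ n : ℤ, x * (2 ^ (k + 1) / 2 ^ Nat.size ⌊x⌋₊) ≠ n) :
    ∀ᶠ y in 𝓝[<] x, rdigit y k = rdigit x k := by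
  have hceil : ⌈x * (2 ^ (k + 1) / 2 ^ Nat.size ⌊x⌋₊)⌉ - 1 =
      ⌊x * (2 ^ (k + 1) / 2 ^ Nat.size ⌊x⌋₊)⌋ := by
    rw [(Int.ceil_eq_floor_add_one_iff_notMem _).2 fun ⟨n, hn⟩ => hk n hn.symm,
      add_sub_cancel_right]
  filter_upwards [eventually_rdigit_nhdsLT hx hpow k] with y hy
  rw [hy, hceil, rdigit_of_nonneg hx.le]

lemma eventually_rdigit_eq_nhdsLT_of_infinite {x : ℝ} (hx : 0 < x)
    (hinf : {k | rdigit x k = true}.Infinite) (k : ℕ) :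
    ∀ᶠ y in 𝓝[<] x, rdigit y k = rdigit x k := by
  have hpow : ∀ j : ℕ, x ≠ 2 ^ j := by
    rintro j rfl
    obtain ⟨l, hl, hl0⟩ := hinf.exists_gt 0
    simp [rdigit_two_pow_eq_false j hl0] at hl
  refine eventually_rdigit_eq_nhdsLT_of_mul_ne_intCast hx hpow fun n hn => ?_
  obtain ⟨l, hl, hkl⟩ := hinf.exists_gt k
  simp [rdigit_eq_false_of_mul_eq_intCast hx.le hn hkl] at hl

lemma eventually_rdigit_one_nhdsLT_two_pow (j : ℕ) :
    ∀ᶠ y in 𝓝[<] (2 ^ j : ℝ), rdigit y 1 = true := by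
  have hj : (0 : ℝ) < 2 ^ j := by positivity
  filter_upwards [Ioo_mem_nhdsLT (by linarith : 3 / 4 * (2 : ℝ) ^ j < 2 ^ j)] with y ⟨hy, hyj⟩
  have hy0 : 0 ≤ y := by linarith
  have hym : y < 2 ^ Nat.size ⌊y⌋₊ := (size_floor_le_iff hy0).1 le_rfl
  have hmj : (2 : ℝ) ^ Nat.size ⌊y⌋₊ ≤ 2 ^ j :=
    pow_le_pow_right₀ one_le_two ((size_floor_le_iff hy0).2 hyj)
  have hfloor : ⌊y * (2 ^ (1 + 1) / 2 ^ Nat.size ⌊y⌋₊)⌋ = 3 := by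
    rw [Int.floor_eq_iff, mul_div_assoc', le_div_iff₀ (by positivity), div_lt_iff₀ (by positivity)]
    norm_num
    constructor <;> linarith
  rw [rdigit_of_nonneg hy0, hfloor]
  rfl

/-- Below a power of two the exponent `Nat.size ⌊y⌋₊` drops by one, so that case is treated
separately; its expansion `1000…` has `M = 0`. -/
lemma eventually_rdigit_nhdsLT_of_tail {x : ℝ} (hx : 0 < x) {M : ℕ} (hM : rdigit x M = true)
    (htail : ∀ k, M < k → rdigit x k = false) :
    ∀ᶠ y in 𝓝[<] x, (∀ k < M, rdigit y k = rdigit x k) ∧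
      ∀ k, M < k → k ≤ 2 * M + 1 → rdigit y k = true := by
  by_cases hpow : ∃ j : ℕ, x = 2 ^ j
  · obtain ⟨j, rfl⟩ := hpow
    obtain rfl : M = 0 := by
      by_contra h
      simp [rdigit_two_pow_eq_false j (Nat.pos_of_ne_zero h)] at hM
    filter_upwards [eventually_rdigit_one_nhdsLT_two_pow j] with y hy
    refine ⟨fun k hk => absurd hk k.not_lt_zero, fun k hk1 hk2 => ?_⟩
    obtain rfl : k = 1 := by omega
    exact hy
  simp only [not_exists] at hpow
  obtain ⟨K, hK⟩ := exists_mul_eq_intCast_of_tail hx.le htail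
  have hbelow : ∀ k ∈ Set.Iio M, ∀ᶠ y in 𝓝[<] x, rdigit y k = rdigit x k := fun k hk =>
    eventually_rdigit_eq_nhdsLT_of_mul_ne_intCast hx hpow fun n hn => by
      simp [rdigit_eq_false_of_mul_eq_intCast hx.le hn hk] at hM
  have habove : ∀ k ∈ Set.Ioc M (2 * M + 1), ∀ᶠ y in 𝓝[<] x, rdigit y k = true := by
    intro k hk
    have heven : K * 2 ^ (k - M) % 2 = 0 :=
      Int.emod_eq_zero_of_dvd (dvd_mul_of_dvd_right (dvd_pow_self 2 (Nat.sub_ne_zero_of_lt hk.1)) K)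
    have hcast : (K : ℝ) * 2 ^ (k - M) = ((K * 2 ^ (k - M) : ℤ) : ℝ) := by push_cast; rfl
    filter_upwards [eventually_rdigit_nhdsLT hx hpow k] with y hy
    rw [hy, mul_two_pow_div_of_le x _ hk.1.le, hK, hcast, Int.ceil_intCast]
    exact decide_eq_true (by omega)
  filter_upwards [(Set.finite_Iio M).eventually_all.2 hbelow,
    (Set.finite_Ioc M (2 * M + 1)).eventually_all.2 habove] with y hlt hgt
  exact ⟨hlt, fun k hk1 hk2 => hgt k ⟨hk1, hk2⟩⟩

lemma eventually_exists_famShatters_rdigit {x : ℝ} (hx : 0 ≤ x) {A : Finset ℕ}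
    (hA : FamShatters (subFam (rdigit x)) A) (hne : A.Nonempty) :
    ∀ᶠ y in 𝓝 x, ∃ A' : Finset ℕ, A'.card = A.card ∧ FamShatters (subFam (rdigit y)) A' := by
  obtain ⟨N, hN⟩ := hA.exists_forall_eq_prefix
  have hprefix : ∀ {l : Filter ℝ}, (∀ k ∈ Set.Iio N, ∀ᶠ y in l, rdigit y k = rdigit x k) →
      ∀ᶠ y in l, ∃ A' : Finset ℕ, A'.card = A.card ∧ FamShatters (subFam (rdigit y)) A' :=
    fun h => ((Set.finite_Iio N).eventually_all.2 h).mono fun y hy => ⟨A, rfl, hN _ hy⟩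
  obtain ⟨k₀, hk₀⟩ := hA.exists_eq_true hne
  have hx' : 0 < x := hx.lt_of_ne (by rintro rfl; simp [rdigit] at hk₀)
  rw [← nhdsLT_sup_nhdsGE, eventually_sup]
  refine ⟨?_, hprefix fun k _ => eventually_rdigit_eq_nhdsGE hx k⟩
  by_cases hfin : {k | rdigit x k = true}.Finite
  · have hM : rdigit x (sSup {k | rdigit x k = true}) = true :=
      Nat.sSup_mem ⟨k₀, hk₀⟩ hfin.bddAbove
    have htail : ∀ k, sSup {k | rdigit x k = true} < k → rdigit x k = false := fun k hk =>
      Bool.not_eq_true _ ▸ fun h => hk.not_ge (le_csSup hfin.bddAbove h)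
    filter_upwards [eventually_rdigit_nhdsLT_of_tail hx' hM htail] with y ⟨hlt, hgt⟩
    exact exists_famShatters_subFam_of_tail hlt htail hgt hA
  · exact hprefix fun k _ => eventually_rdigit_eq_nhdsLT_of_infinite hx' hfin k

lemma lowerSemicontinuous_VCdimR : LowerSemicontinuous VCdimR := by
  refine lowerSemicontinuous_vcDimF (F := fun x => subFam (rdigit x)) fun x A hA => ?_
  rcases A.eq_empty_or_nonempty with rfl | hne
  · exact Eventually.of_forall fun y => ⟨∅, rfl, famShatters_subFam_empty _⟩
  rw [← rdigit_abs] at hA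
  filter_upwards [(continuous_abs.tendsto x).eventually
    (eventually_exists_famShatters_rdigit (abs_nonneg x) hA hne)] with y hy
  rwa [rdigit_abs] at hy

/-- If reals `r i` of VC dimension at most `d` converge to `r*`, then
`r*` has VC dimension at most `d`. -/
theorem vcdimR_le_of_tendsto (d : ℕ) (r : ℕ → ℝ) (rstar : ℝ)
    (hconv : Filter.Tendsto r Filter.atTop (nhds rstar))
    (hd : ∀ i : ℕ, VCdimR (r i) ≤ (d : ℕ∞)) : VCdimR rstar ≤ (d : ℕ∞) :=
  (lowerSemicontinuous_VCdimR.isClosed_preimage d).mem_of_tendsto hconv (Eventually.of_forall hd)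
end

section
/- If S is a binary string, then VCdim(S) ≤ 2·alt(S), where alt(S) is the number of maximal contiguous blocks of 1's in S. -/
/-- The number of maximal contiguous blocks of 1's in `S` (as an extended natural),
counted via their starting indices. -/
noncomputable def altCount (S : ℕ → Bool) : ℕ∞ :=
  {n : ℕ | S n = true ∧ (n = 0 ∨ S (n - 1) = false)}.encard

/-!
Pick every other element of a shattered set `A`. The substring that cuts out exactly these
elements has a `1` at each picked position and a `0` at each skipped one in between, so the
picked positions lie in pairwise distinct blocks of `1`'s. Hence `alt S ≥ ⌈|A| / 2⌉`.
-/

theorem Finset.exists_interleaved_subset {α : Type*} [LinearOrder α] (A : Finset α) :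
    ∃ B ⊆ A, A.card ≤ 2 * B.card ∧
      ∀ p ∈ B, ∀ q ∈ B, p < q → ∃ z ∈ A \ B, p < z ∧ z < q := by
  induction A using Finset.strongInduction with
  | H A ih =>
  by_cases hA : A.card ≤ 1
  · exact ⟨A, subset_rfl, by omega, fun p hp q hq hpq =>
      absurd (Finset.card_le_one.mp hA p hp q hq) hpq.ne⟩
  have hA₀ : A.Nonempty := Finset.card_pos.mp (by omega)
  set a := A.max' hA₀
  have ha : a ∈ A := A.max'_mem hA₀
  have hA₁ : (A.erase a).Nonempty :=
    Finset.card_pos.mp (by rw [Finset.card_erase_of_mem ha]; omega)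
  set b := (A.erase a).max' hA₁
  have hb : b ∈ A.erase a := (A.erase a).max'_mem hA₁
  have hba : b < a :=
    lt_of_le_of_ne (A.le_max' b (Finset.mem_of_mem_erase hb)) (Finset.ne_of_mem_erase hb)
  obtain ⟨B, hBA, hcard, hsep⟩ := ih ((A.erase a).erase b)
    ((Finset.erase_ssubset hb).trans (Finset.erase_ssubset ha))
  have haB : a ∉ B := fun h => Finset.ne_of_mem_erase (Finset.mem_of_mem_erase (hBA h)) rfl
  have hbB : b ∉ B := fun h => Finset.ne_of_mem_erase (hBA h) rfl
  refine ⟨insert a B, Finset.insert_subset ha (hBA.trans ((Finset.erase_subset _ _).trans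
    (Finset.erase_subset _ _))), ?_, ?_⟩
  · rw [Finset.card_insert_of_notMem haB]
    rw [Finset.card_erase_of_mem hb, Finset.card_erase_of_mem ha] at hcard
    omega
  · have hmem : ∀ {z}, z ∈ insert a B → z ∈ A := fun hz => by
      rcases Finset.mem_insert.mp hz with rfl | hz
      exacts [ha, Finset.mem_of_mem_erase (Finset.mem_of_mem_erase (hBA hz))]
    intro p hp q hq hpq
    have hpB : p ∈ B := (Finset.mem_insert.mp hp).resolve_left
      fun h => (hpq.trans_le (A.le_max' q (hmem hq))).ne h
    rcases Finset.mem_insert.mp hq with rfl | hqB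
    · refine ⟨b, ?_, ?_, hba⟩
      · simp [Finset.mem_of_mem_erase hb, hba.ne, hbB]
      · have hp' := hBA hpB
        exact lt_of_le_of_ne ((A.erase a).le_max' p (Finset.mem_of_mem_erase hp'))
          (Finset.ne_of_mem_erase hp')
    · obtain ⟨z, hz, hpz, hzq⟩ := hsep p hpB q hqB hpq
      simp only [Finset.mem_sdiff, Finset.mem_erase, Finset.mem_insert] at hz ⊢
      exact ⟨z, ⟨hz.1.2.2, not_or.mpr ⟨hz.1.2.1, hz.2⟩⟩, hpz, hzq⟩

theorem exists_blockStart_le (S : ℕ → Bool) {b : ℕ} (hb : S b = true) :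
    ∃ n ≤ b, (n = 0 ∨ S (n - 1) = false) ∧ ∀ i, n ≤ i → i ≤ b → S i = true := by
  classical
  have hex : ∃ n, ∀ i, n ≤ i → i ≤ b → S i = true :=
    ⟨b, fun i h₁ h₂ => (le_antisymm h₂ h₁) ▸ hb⟩
  refine ⟨Nat.find hex, Nat.find_min' hex fun i h₁ h₂ => (le_antisymm h₂ h₁) ▸ hb, ?_,
    Nat.find_spec hex⟩
  rcases Nat.eq_zero_or_pos (Nat.find hex) with h | h
  · exact Or.inl h
  refine Or.inr (Bool.eq_false_iff.mpr fun hS => Nat.find_min hex (Nat.sub_one_lt h.ne') ?_)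
  intro i h₁ h₂
  by_cases hi : i = Nat.find hex - 1
  · exact hi ▸ hS
  · exact Nat.find_spec hex i (by omega) h₂

theorem card_le_altCount (S : ℕ → Bool) (P : Finset ℕ) (hP : ∀ p ∈ P, S p = true)
    (hsep : ∀ p ∈ P, ∀ q ∈ P, p < q → ∃ z, p < z ∧ z < q ∧ S z = false) :
    (P.card : ℕ∞) ≤ altCount S := by
  choose! start hstart_le hstart_first hstart_run using
    fun p (hp : p ∈ P) => exists_blockStart_le S (hP p hp)
  have hmono : StrictMonoOn start P := by
    intro p hp q hq hpq
    obtain ⟨z, hpz, hzq, hz⟩ := hsep p hp q hq hpq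
    have hzs : z < start q := by
      by_contra! h
      simp [hstart_run q hq z h hzq.le] at hz
    exact (hstart_le p hp).trans_lt (hpz.trans hzs)
  calc (P.card : ℕ∞) = (start '' P).encard := by
        rw [hmono.injOn.encard_image, Set.encard_coe_eq_coe_finsetCard]
    _ ≤ altCount S := Set.encard_mono fun n ⟨p, hp, hn⟩ => hn ▸
        ⟨hstart_run p hp _ le_rfl (hstart_le p hp), hstart_first p hp⟩

theorem card_le_altCount_of_window (S : ℕ → Bool) {A B : Finset ℕ} {t w : ℕ}
    (hwin : ∀ i ∈ A, (i < w ∧ S (t + i) = true ↔ i ∈ B)) (hBA : B ⊆ A)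
    (hsep : ∀ p ∈ B, ∀ q ∈ B, p < q → ∃ z ∈ A \ B, p < z ∧ z < q) :
    (B.card : ℕ∞) ≤ altCount S := by
  have hones : ∀ p ∈ B, p < w ∧ S (t + p) = true := fun p hp => (hwin p (hBA hp)).mpr hp
  rw [← B.card_map (addLeftEmbedding t)]
  refine card_le_altCount S _ ?_ ?_
  · simpa using fun p hp => (hones p hp).2
  · simp only [Finset.mem_map, addLeftEmbedding_apply]
    rintro _ ⟨p, hp, rfl⟩ _ ⟨q, hq, rfl⟩ hpq
    obtain ⟨z, hz, hpz, hzq⟩ := hsep p hp q hq (by omega)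
    obtain ⟨hzA, hzB⟩ := Finset.mem_sdiff.mp hz
    refine ⟨t + z, by omega, by omega, Bool.eq_false_iff.mpr fun h => hzB ?_⟩
    exact (hwin z hzA).mp ⟨by have := (hones q hq).1; omega, h⟩

/-- `VCdim S ≤ 2 · alt S`. -/
theorem vcdim_le_two_mul_alt (S : ℕ → Bool) : VCdim S ≤ 2 * altCount S := by
  refine sSup_le ?_
  rintro _ ⟨A, hA, rfl⟩
  obtain ⟨B, hBA, hcard, hsep⟩ := A.exists_interleaved_subset
  obtain ⟨_, ⟨t, w, rfl⟩, hwin⟩ := hA B hBA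
  calc (A.card : ℕ∞) ≤ 2 * B.card := by exact_mod_cast hcard
    _ ≤ 2 * altCount S := by gcongr; exact card_le_altCount_of_window S hwin hBA hsep
end

section
/- Let S be a binary string and let S^{[p]} (p > 1 an integer) be obtained by replacing each symbol c of S with 0^{p−1}c. Then VCdim(S^{[p]}) = VCdim(S). -/
/-- The string `S^{[p]}` obtained from `S` by replacing each symbol `c` with `0^{p-1} c`. -/
def dilute (S : ℕ → Bool) (p : ℕ) : ℕ → Bool :=
  fun n => if n % p = p - 1 then S (n / p) else false

/-!
The ones of `S^{[p]}` sit at positions `≡ p - 1 (mod p)`. Since the whole of a shattered set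
is cut out by one window, a set shattered by the windows of `S^{[p]}` lies in a single residue
class mod `p`; on such a set, `i ↦ i / p` is injective and turns every window of `S^{[p]}` into a
window of `S`, so the image is shattered by `S`. Conversely `i ↦ p * i + (p - 1)` turns each
window `(t, w)` of `S` into the window `(p * t, p * w)` of `S^{[p]}`.
-/

theorem FamShatters.image {F G : Set (Set ℕ)} {A : Finset ℕ} (hA : FamShatters F A)
    (f : ℕ → ℕ) (hFG : ∀ C ∈ F, ∃ D ∈ G, ∀ i ∈ A, f i ∈ D ↔ i ∈ C) :
    FamShatters G (A.image f) := by
  intro B _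
  obtain ⟨C, hCF, hC⟩ := hA (A.filter (f · ∈ B)) (Finset.filter_subset _ _)
  obtain ⟨D, hDG, hD⟩ := hFG C hCF
  refine ⟨D, hDG, Finset.forall_mem_image.mpr fun i hi => ?_⟩
  rw [hD i hi, hC i hi, Finset.mem_filter, and_iff_right hi]

theorem vcDimF_le_of_forall_famShatters {F G : Set (Set ℕ)}
    (h : ∀ A, FamShatters F A → ∃ A', FamShatters G A' ∧ A'.card = A.card) :
    vcDimF F ≤ vcDimF G := by
  refine sSup_le_sSup ?_
  rintro _ ⟨A, hA, rfl⟩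
  obtain ⟨A', hA', hcard⟩ := h A hA
  exact ⟨A', hA', by rw [hcard]⟩

section Dilute

variable {S : ℕ → Bool} {p : ℕ}

theorem mul_add_pred_div (hp : 0 < p) (q : ℕ) : (p * q + (p - 1)) / p = q := by
  rw [Nat.mul_add_div hp, Nat.div_eq_of_lt (by omega), add_zero]

theorem lt_div_iff_mul_add_lt (hp : 0 < p) (q r w : ℕ) :
    q < (w + (p - 1) - r) / p ↔ p * q + r < w := by
  rw [← Nat.succ_le_iff, Nat.le_div_iff_mul_le hp, Nat.succ_mul, mul_comm q p]
  omega

theorem dilute_mul_add_pred (hp : 0 < p) (q : ℕ) : dilute S p (p * q + (p - 1)) = S q := by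
  have hmod : (p * q + (p - 1)) % p = p - 1 := by
    rw [Nat.mul_add_mod, Nat.mod_eq_of_lt (by omega)]
  simp only [dilute, hmod, mul_add_pred_div hp, if_true]

theorem mod_eq_pred_of_dilute_eq_true {n : ℕ} (h : dilute S p n = true) : n % p = p - 1 := by
  unfold dilute at h
  split_ifs at h with hn
  · exact hn

theorem exists_dilute_window (hp : 0 < p) {C : Set ℕ} (hC : C ∈ subFam S) :
    ∃ D ∈ subFam (dilute S p), ∀ i, p * i + (p - 1) ∈ D ↔ i ∈ C := by
  obtain ⟨t, w, rfl⟩ := hC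
  refine ⟨_, ⟨p * t, p * w, rfl⟩, fun i => ?_⟩
  have hwidth : p * i + (p - 1) < p * w ↔ i < w := by
    simpa only [Nat.add_sub_cancel, Nat.mul_div_cancel_left _ hp] using
      (lt_div_iff_mul_add_lt hp i (p - 1) (p * w)).symm
  simp only [Set.mem_ofPred_eq]
  rw [show p * t + (p * i + (p - 1)) = p * (t + i) + (p - 1) by ring,
    dilute_mul_add_pred hp, hwidth]

theorem modEq_of_famShatters_dilute {A : Finset ℕ}
    (hA : FamShatters (subFam (dilute S p)) A) : ∀ i ∈ A, ∀ j ∈ A, i ≡ j [MOD p] := by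
  obtain ⟨_, ⟨t, w, rfl⟩, hfull⟩ := hA A subset_rfl
  have hmod : ∀ i ∈ A, (t + i) % p = p - 1 := fun i hi =>
    mod_eq_pred_of_dilute_eq_true ((hfull i hi).mpr hi).2
  intro i hi j hj
  exact Nat.ModEq.add_left_cancel' t ((hmod i hi).trans (hmod j hj).symm)

theorem add_eq_mul_add_pred_of_modEq {t i j : ℕ} (hi : (t + i) % p = p - 1)
    (hij : j ≡ i [MOD p]) : t + j = p * ((t + i % p) / p + j / p) + (p - 1) := by
  have hshift : (t + i % p) % p = p - 1 := by
    rw [Nat.add_mod, Nat.mod_mod, ← Nat.add_mod, hi]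
  have hs := Nat.div_add_mod (t + i % p) p
  have hj := Nat.div_add_mod j p
  rw [hshift] at hs
  rw [hij] at hj
  rw [mul_add]
  omega

theorem exists_window_of_dilute (hp : 0 < p) {A : Finset ℕ}
    (hA : ∀ i ∈ A, ∀ j ∈ A, i ≡ j [MOD p]) {D : Set ℕ} (hD : D ∈ subFam (dilute S p)) :
    ∃ C ∈ subFam S, ∀ i ∈ A, i / p ∈ C ↔ i ∈ D := by
  by_cases hmeet : ∃ i₀ ∈ A, i₀ ∈ D
  · obtain ⟨i₀, hi₀A, hi₀D⟩ := hmeet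
    obtain ⟨t, w, rfl⟩ := hD
    have halign := mod_eq_pred_of_dilute_eq_true hi₀D.2
    refine ⟨_, ⟨(t + i₀ % p) / p, (w + (p - 1) - i₀ % p) / p, rfl⟩, fun i hi => ?_⟩
    have hshift := add_eq_mul_add_pred_of_modEq halign (hA i hi i₀ hi₀A)
    have hwidth : i / p < (w + (p - 1) - i₀ % p) / p ↔ i < w := by
      rw [lt_div_iff_mul_add_lt hp, ← hA i hi i₀ hi₀A, Nat.div_add_mod]
    simp only [Set.mem_ofPred_eq]
    rw [hshift, dilute_mul_add_pred hp, hwidth]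
  · push Not at hmeet
    refine ⟨_, ⟨0, 0, rfl⟩, fun i hi => ?_⟩
    simp only [Set.mem_ofPred_eq, Nat.not_lt_zero, false_and, false_iff]
    exact hmeet i hi

end Dilute

/-- For `p > 1`, `VCdim (S^{[p]}) = VCdim S`. -/
theorem vcdim_dilute (S : ℕ → Bool) (p : ℕ) (hp : 1 < p) :
    VCdim (dilute S p) = VCdim S := by
  have hp0 : 0 < p := by omega
  refine le_antisymm (vcDimF_le_of_forall_famShatters fun A hA => ?_)
    (vcDimF_le_of_forall_famShatters fun A hA => ?_)
  · have hmod := modEq_of_famShatters_dilute hA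
    refine ⟨A.image (· / p), hA.image _ fun D hD => exists_window_of_dilute hp0 hmod hD, ?_⟩
    exact Finset.card_image_of_injOn fun i hi j hj hij =>
      Nat.ext_div_modEq hij (hmod i hi j hj)
  · refine ⟨A.image (fun i => p * i + (p - 1)),
      hA.image _ fun C hC => (exists_dilute_window hp0 hC).imp fun _ ⟨hD, h⟩ => ⟨hD, fun i _ => h i⟩,
      Finset.card_image_of_injective _ fun a b hab => ?_⟩
    simpa only [mul_add_pred_div hp0] using congrArg (· / p) hab
end
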